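/- arXiv:2310.19739 — 2 statements merged into one kernel-verified Lean document; each statement's English description precedes it below -/
import Mathlib

section
/- Let 0 < σ ≤ 1 and τ, τ* ∈ ℝ, and define f(θ) = sin(σ(θ - τ*)) / (sin(θ - τ))^σ on (τ, τ + π). Assume τ ≠ τ* + kπ/σ and τ + π ≠ τ* + kπ/σ for every integer k. Then exactly one of the following holds: (1) f is monotonic, lim_{θ→τ+} f(θ) and lim_{θ→(τ+π)-} f(θ) are both infinite (±∞) and have opposite signs; (2) f is not monotonic and both limits are infinite with the same sign. -/
/-!
With `A = sin (σ (τ - τs))` and `B = sin (σ (τ + π - τs))`, the numerator tends to `A` at `τ`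
and to `B` at `τ + π` while the denominator tends to `0⁺`, so `f` tends to `sign A · ∞` at the
left end and to `sign B · ∞` at the right end; `A, B ≠ 0` is exactly the hypothesis on `τ`.
If the signs agree, `f` tends to the same infinity at both ends and cannot be monotone.
If they differ, `f' = σ sin φ / sin (θ - τ)^(σ + 1)` with the phase
`φ = (θ - τ) - σ (θ - τs)`, which runs (as `σ ≤ 1`) through an interval of length `(1 - σ) π < π`
whose endpoints have sines `-A` and `B`, of the same sign; so `sin φ` keeps that sign throughout
and `f` is strictly monotone.
-/

open Real Set Filter Topology

-- Writes `sin t` as a nonnegative combination of `sin l` and `sin r` when `l ≤ t ≤ r ≤ l + π`.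
theorem sin_sub_mul_sin_eq (l r t : ℝ) :
    sin (r - l) * sin t = sin (t - l) * sin r + sin (r - t) * sin l := by
  simp only [sin_sub]
  ring

theorem sin_pos_of_mem_Icc_of_sin_pos {l r t : ℝ} (hl : 0 < sin l) (hr : 0 < sin r)
    (hlen : r - l < π) (ht : t ∈ Icc l r) : 0 < sin t := by
  obtain rfl | hlt := ht.1.eq_or_lt
  · exact hl
  have hsin_len : 0 < sin (r - l) := sin_pos_of_pos_of_lt_pi (by linarith [ht.2]) hlen
  have hleft : 0 < sin (t - l) := sin_pos_of_pos_of_lt_pi (by linarith) (by linarith [ht.2])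
  have hright : 0 ≤ sin (r - t) := sin_nonneg_of_nonneg_of_le_pi (by linarith [ht.2]) (by linarith)
  refine pos_of_mul_pos_right (a := sin (r - l)) ?_ hsin_len.le
  rw [sin_sub_mul_sin_eq]
  positivity

theorem sin_neg_of_mem_Icc_of_sin_neg {l r t : ℝ} (hl : sin l < 0) (hr : sin r < 0)
    (hlen : r - l < π) (ht : t ∈ Icc l r) : sin t < 0 := by
  have := sin_pos_of_mem_Icc_of_sin_pos (l := l + π) (r := r + π) (t := t + π)
    (by rw [sin_add_pi]; linarith) (by rw [sin_add_pi]; linarith) (by linarith)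
    ⟨by linarith [ht.1], by linarith [ht.2]⟩
  rw [sin_add_pi] at this
  linarith

theorem tendsto_rpow_nhdsGT_zero {σ : ℝ} (hσ : 0 < σ) :
    Tendsto (· ^ σ) (𝓝[>] (0 : ℝ)) (𝓝[>] 0) := by
  refine tendsto_nhdsWithin_of_tendsto_nhds_of_eventually_within _ ?_ ?_
  · simpa [zero_rpow hσ.ne'] using
      ((continuousAt_rpow_const 0 σ (Or.inr hσ.le)).tendsto).mono_left nhdsWithin_le_nhds
  · filter_upwards [self_mem_nhdsWithin] with x hx using rpow_pos_of_pos hx σ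

section Monotone

variable {α β : Type*} [LinearOrder α] [TopologicalSpace α] [OrderTopology α] [DenselyOrdered α]
  [Preorder β] {f : α → β} {a b : α}

theorem MonotoneOn.not_tendsto_atTop_nhdsGT [NoMaxOrder β] (hf : MonotoneOn f (Ioo a b))
    (hab : a < b) : ¬ Tendsto f (𝓝[>] a) atTop := by
  intro hlim
  obtain ⟨c, hac, hcb⟩ := exists_between hab
  have := nhdsGT_neBot_of_exists_gt ⟨c, hac⟩
  obtain ⟨x, hfx, hx⟩ := ((hlim.eventually_gt_atTop (f c)).and (Ioo_mem_nhdsGT hac)).exists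
  exact (hfx.trans_le (hf ⟨hx.1, hx.2.trans hcb⟩ ⟨hac, hcb⟩ hx.2.le)).false

theorem AntitoneOn.not_tendsto_atBot_nhdsGT [NoMinOrder β] (hf : AntitoneOn f (Ioo a b))
    (hab : a < b) : ¬ Tendsto f (𝓝[>] a) atBot :=
  MonotoneOn.not_tendsto_atTop_nhdsGT (β := βᵒᵈ) hf hab

theorem AntitoneOn.not_tendsto_atTop_nhdsLT [NoMaxOrder β] (hf : AntitoneOn f (Ioo a b))
    (hab : a < b) : ¬ Tendsto f (𝓝[<] b) atTop :=
  MonotoneOn.not_tendsto_atTop_nhdsGT (α := αᵒᵈ) (a := OrderDual.toDual b)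
    (fun _ hx _ hy hxy => hf ⟨hy.2, hy.1⟩ ⟨hx.2, hx.1⟩ hxy) hab

theorem MonotoneOn.not_tendsto_atBot_nhdsLT [NoMinOrder β] (hf : MonotoneOn f (Ioo a b))
    (hab : a < b) : ¬ Tendsto f (𝓝[<] b) atBot :=
  AntitoneOn.not_tendsto_atTop_nhdsLT (β := βᵒᵈ) hf hab

theorem not_monotoneOn_or_antitoneOn_of_tendsto_atTop [NoMaxOrder β] (hab : a < b)
    (ha : Tendsto f (𝓝[>] a) atTop) (hb : Tendsto f (𝓝[<] b) atTop) :
    ¬ (MonotoneOn f (Ioo a b) ∨ AntitoneOn f (Ioo a b)) := by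
  rintro (hf | hf)
  exacts [hf.not_tendsto_atTop_nhdsGT hab ha, hf.not_tendsto_atTop_nhdsLT hab hb]

theorem not_monotoneOn_or_antitoneOn_of_tendsto_atBot [NoMinOrder β] (hab : a < b)
    (ha : Tendsto f (𝓝[>] a) atBot) (hb : Tendsto f (𝓝[<] b) atBot) :
    ¬ (MonotoneOn f (Ioo a b) ∨ AntitoneOn f (Ioo a b)) := by
  rintro (hf | hf)
  exacts [hf.not_tendsto_atBot_nhdsLT hab hb, hf.not_tendsto_atBot_nhdsGT hab ha]

end Monotone

theorem sin_mul_sub_ne_zero {σ θ τs : ℝ} (hσ : σ ≠ 0) (h : ∀ k : ℤ, θ ≠ τs + k * π / σ) :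
    sin (σ * (θ - τs)) ≠ 0 := by
  rw [Ne, sin_eq_zero_iff, not_exists]
  intro k hk
  exact h k (by field_simp; linarith)

theorem sin_sub_pos_of_mem_Ioo {τ θ : ℝ} (hθ : θ ∈ Ioo τ (τ + π)) : 0 < sin (θ - τ) :=
  sin_pos_of_pos_of_lt_pi (by linarith [hθ.1]) (by linarith [hθ.2])

theorem tendsto_sin_sub_nhdsGT (τ : ℝ) :
    Tendsto (fun θ => sin (θ - τ)) (𝓝[>] τ) (𝓝[>] 0) := by
  refine tendsto_nhdsWithin_of_tendsto_nhds_of_eventually_within _ ?_ ?_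
  · simpa using ((by fun_prop : Continuous fun θ => sin (θ - τ)).tendsto τ).mono_left
      nhdsWithin_le_nhds
  · filter_upwards [Ioo_mem_nhdsGT (by linarith [pi_pos] : τ < τ + π)] using
    fun _ => sin_sub_pos_of_mem_Ioo

theorem tendsto_sin_sub_nhdsLT (τ : ℝ) :
    Tendsto (fun θ => sin (θ - τ)) (𝓝[<] (τ + π)) (𝓝[>] 0) := by
  refine tendsto_nhdsWithin_of_tendsto_nhds_of_eventually_within _ ?_ ?_
  · simpa using ((by fun_prop : Continuous fun θ => sin (θ - τ)).tendsto (τ + π)).mono_left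
      nhdsWithin_le_nhds
  · filter_upwards [Ioo_mem_nhdsLT (by linarith [pi_pos] : τ < τ + π)] using
    fun _ => sin_sub_pos_of_mem_Ioo

noncomputable def sinRatio (σ τ τs θ : ℝ) : ℝ := sin (σ * (θ - τs)) / sin (θ - τ) ^ σ

namespace sinRatio

variable {σ τ τs : ℝ}

theorem tendsto_atTop {l : Filter ℝ} {θ₀ : ℝ} (hσ : 0 < σ) (hl : l ≤ 𝓝 θ₀)
    (hden : Tendsto (fun θ => sin (θ - τ)) l (𝓝[>] 0)) (hnum : 0 < sin (σ * (θ₀ - τs))) :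
    Tendsto (sinRatio σ τ τs) l atTop := by
  have hnum_lim : Tendsto (fun θ => sin (σ * (θ - τs))) l (𝓝 (sin (σ * (θ₀ - τs)))) :=
    ((by fun_prop : Continuous fun θ => sin (σ * (θ - τs))).tendsto θ₀).mono_left hl
  exact hnum_lim.pos_mul_atTop hnum
    ((tendsto_rpow_nhdsGT_zero hσ).comp hden).inv_tendsto_nhdsGT_zero

theorem tendsto_atBot {l : Filter ℝ} {θ₀ : ℝ} (hσ : 0 < σ) (hl : l ≤ 𝓝 θ₀)
    (hden : Tendsto (fun θ => sin (θ - τ)) l (𝓝[>] 0)) (hnum : sin (σ * (θ₀ - τs)) < 0) :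
    Tendsto (sinRatio σ τ τs) l atBot := by
  have hnum_lim : Tendsto (fun θ => sin (σ * (θ - τs))) l (𝓝 (sin (σ * (θ₀ - τs)))) :=
    ((by fun_prop : Continuous fun θ => sin (σ * (θ - τs))).tendsto θ₀).mono_left hl
  exact hnum_lim.neg_mul_atTop hnum
    ((tendsto_rpow_nhdsGT_zero hσ).comp hden).inv_tendsto_nhdsGT_zero

theorem hasDerivAt {θ : ℝ} (hθ : 0 < sin (θ - τ)) :
    HasDerivAt (sinRatio σ τ τs)
      (σ * sin ((θ - τ) - σ * (θ - τs)) / sin (θ - τ) ^ (σ + 1)) θ := by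
  have hnum : HasDerivAt (fun θ => sin (σ * (θ - τs))) (cos (σ * (θ - τs)) * σ) θ := by
    simpa using ((hasDerivAt_id θ).sub_const τs).const_mul σ |>.sin
  have hden : HasDerivAt (fun θ => sin (θ - τ) ^ σ)
      (cos (θ - τ) * σ * sin (θ - τ) ^ (σ - 1)) θ := by
    simpa using ((hasDerivAt_id θ).sub_const τ).sin.rpow_const (p := σ) (Or.inl hθ.ne')
  refine (hnum.div hden (rpow_pos_of_pos hθ σ).ne').congr_deriv ?_
  rw [rpow_add_one hθ.ne', rpow_sub_one hθ.ne', sin_sub (θ - τ)]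
  field_simp

theorem phase_mem_Icc (hσ1 : σ ≤ 1) {θ : ℝ} (hθ : θ ∈ Ioo τ (τ + π)) :
    (θ - τ) - σ * (θ - τs) ∈ Icc (-(σ * (τ - τs))) (π - σ * (τ + π - τs)) := by
  constructor <;> nlinarith [hθ.1, hθ.2]

theorem strictMonoOn (hσ0 : 0 < σ) (hσ1 : σ ≤ 1) (hA : sin (σ * (τ - τs)) < 0)
    (hB : 0 < sin (σ * (τ + π - τs))) : StrictMonoOn (sinRatio σ τ τs) (Ioo τ (τ + π)) := by
  refine strictMonoOn_of_deriv_pos (convex_Ioo _ _)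
    (fun _ hθ => (hasDerivAt (sin_sub_pos_of_mem_Ioo hθ)).continuousAt.continuousWithinAt)
    fun θ hθ => ?_
  rw [interior_Ioo] at hθ
  have hphase := sin_pos_of_mem_Icc_of_sin_pos (by rwa [sin_neg, neg_pos]) (by rwa [sin_pi_sub])
    (by nlinarith [mul_pos hσ0 pi_pos]) (phase_mem_Icc hσ1 hθ)
  have hden := sin_sub_pos_of_mem_Ioo hθ
  rw [(hasDerivAt (τs := τs) hden).deriv]
  positivity

theorem strictAntiOn (hσ0 : 0 < σ) (hσ1 : σ ≤ 1) (hA : 0 < sin (σ * (τ - τs)))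
    (hB : sin (σ * (τ + π - τs)) < 0) : StrictAntiOn (sinRatio σ τ τs) (Ioo τ (τ + π)) := by
  refine strictAntiOn_of_deriv_neg (convex_Ioo _ _)
    (fun _ hθ => (hasDerivAt (sin_sub_pos_of_mem_Ioo hθ)).continuousAt.continuousWithinAt)
    fun θ hθ => ?_
  rw [interior_Ioo] at hθ
  have hphase := sin_neg_of_mem_Icc_of_sin_neg (by rwa [sin_neg, neg_lt_zero])
    (by rwa [sin_pi_sub]) (by nlinarith [mul_pos hσ0 pi_pos]) (phase_mem_Icc hσ1 hθ)
  have hden := sin_sub_pos_of_mem_Ioo hθ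
  rw [(hasDerivAt (τs := τs) hden).deriv]
  exact div_neg_of_neg_of_pos (mul_neg_of_pos_of_neg hσ0 hphase) (rpow_pos_of_pos hden _)

end sinRatio

theorem stmt_1 (σ τ τs : ℝ) (hσ0 : 0 < σ) (hσ1 : σ ≤ 1)
    (hk : ∀ k : ℤ, τ ≠ τs + k * π / σ ∧ τ + π ≠ τs + k * π / σ)
    (f : ℝ → ℝ)
    (hf : f = fun θ : ℝ => Real.sin (σ * (θ - τs)) / (Real.sin (θ - τ)) ^ σ) :
    Xor'
      ((MonotoneOn f (Set.Ioo τ (τ + π)) ∨ AntitoneOn f (Set.Ioo τ (τ + π))) ∧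
        ((Tendsto f (𝓝[>] τ) atTop ∧ Tendsto f (𝓝[<] (τ + π)) atBot) ∨
         (Tendsto f (𝓝[>] τ) atBot ∧ Tendsto f (𝓝[<] (τ + π)) atTop)))
      ((¬ (MonotoneOn f (Set.Ioo τ (τ + π)) ∨ AntitoneOn f (Set.Ioo τ (τ + π)))) ∧
        ((Tendsto f (𝓝[>] τ) atTop ∧ Tendsto f (𝓝[<] (τ + π)) atTop) ∨
         (Tendsto f (𝓝[>] τ) atBot ∧ Tendsto f (𝓝[<] (τ + π)) atBot))) := by
  obtain rfl : f = sinRatio σ τ τs := hf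
  have hτ : τ < τ + π := by linarith [pi_pos]
  have hL : 𝓝[>] τ ≤ 𝓝 τ := nhdsWithin_le_nhds
  have hR : 𝓝[<] (τ + π) ≤ 𝓝 (τ + π) := nhdsWithin_le_nhds
  have topL := sinRatio.tendsto_atTop (τs := τs) hσ0 hL (tendsto_sin_sub_nhdsGT τ)
  have botL := sinRatio.tendsto_atBot (τs := τs) hσ0 hL (tendsto_sin_sub_nhdsGT τ)
  have topR := sinRatio.tendsto_atTop (τs := τs) hσ0 hR (tendsto_sin_sub_nhdsLT τ)
  have botR := sinRatio.tendsto_atBot (τs := τs) hσ0 hR (tendsto_sin_sub_nhdsLT τ)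
  rcases (sin_mul_sub_ne_zero hσ0.ne' fun k => (hk k).1).lt_or_gt with hA | hA <;>
    rcases (sin_mul_sub_ne_zero hσ0.ne' fun k => (hk k).2).lt_or_gt with hB | hB
  · have hnot := not_monotoneOn_or_antitoneOn_of_tendsto_atBot hτ (botL hA) (botR hB)
    exact Or.inr ⟨⟨hnot, Or.inr ⟨botL hA, botR hB⟩⟩, fun h => hnot h.1⟩
  · have hmono := (sinRatio.strictMonoOn hσ0 hσ1 hA hB).monotoneOn
    exact Or.inl ⟨⟨Or.inl hmono, Or.inr ⟨botL hA, topR hB⟩⟩, fun h => h.1 (Or.inl hmono)⟩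
  · have hanti := (sinRatio.strictAntiOn hσ0 hσ1 hA hB).antitoneOn
    exact Or.inl ⟨⟨Or.inr hanti, Or.inl ⟨topL hA, botR hB⟩⟩, fun h => h.1 (Or.inr hanti)⟩
  · have hnot := not_monotoneOn_or_antitoneOn_of_tendsto_atTop hτ (topL hA) (topR hB)
    exact Or.inr ⟨⟨hnot, Or.inl ⟨topL hA, topR hB⟩⟩, fun h => hnot h.1⟩
end

section
/- Let τ_0 < τ_1 < ⋯ < τ_{μ−1} be real numbers with τ_{μ−1} − τ_0 < π, and extend by τ_{ρ+kμ} = τ_ρ + kπ. Then for a tuple (k_0, …, k_{μ−1}) ∈ ℤ^μ, the intersection ⋂_{ρ=0}^{μ−1} (τ_ρ + (k_ρ−1)π, τ_ρ + k_ρπ) is non-empty if and only if all k_ρ satisfy k_0 ≥ k_1 ≥ ⋯ ≥ k_{μ−1} ≥ k_0 − 1; and in that case the intersection equals an interval of the form (τ_{ν−1}, τ_ν) for some ν ∈ ℤ. -/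
/-!
With `ν_ρ = ρ + k_ρ μ`, the `ρ`-th interval is `(T (ν_ρ - μ), T ν_ρ)`, and `T` is strictly
increasing because `τ` spreads over less than `π`. So the intersection is
`(T (max ν - μ), T (min ν))`: it is nonempty iff all `ν_ρ` lie in a window of fewer than `μ`
consecutive integers, which unwinds to `k_0 ≥ ⋯ ≥ k_{μ-1} ≥ k_0 - 1`. The `ν_ρ` are distinct
(they have distinct residues mod `μ`), so `μ` of them fill such a window, whence
`max ν - μ = min ν - 1`.
-/

open Real Set

theorem Int.exists_fin_add_mul {μ : ℕ} (hμ : 0 < μ) (n : ℤ) :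
    ∃ (ρ : Fin μ) (k : ℤ), n = (ρ : ℕ) + k * μ := by
  have hr₀ : 0 ≤ n % μ := Int.emod_nonneg n (by omega)
  have hr₁ : n % μ < μ := Int.emod_lt_of_pos n (by omega)
  refine ⟨⟨(n % μ).toNat, by omega⟩, n / μ, ?_⟩
  simp only [Int.toNat_of_nonneg hr₀]
  rw [mul_comm, Int.emod_add_mul_ediv]

theorem strictMono_of_quasiperiodic_extension {μ : ℕ} (hμ : 0 < μ) {τ : Fin μ → ℝ}
    (hτ : StrictMono τ) {c : ℝ} (hc : τ ⟨μ - 1, Nat.sub_lt hμ Nat.one_pos⟩ - τ ⟨0, hμ⟩ < c)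
    {T : ℤ → ℝ}
    (hT : ∀ (ρ : Fin μ) (k : ℤ), T ((ρ : ℕ) + k * μ) = τ ρ + k * c) : StrictMono T := by
  refine strictMono_int_of_lt_succ fun n => ?_
  obtain ⟨ρ, k, rfl⟩ := Int.exists_fin_add_mul hμ n
  rw [hT]
  by_cases hρ : (ρ : ℕ) + 1 < μ
  · have hsucc : ((ρ : ℕ) : ℤ) + k * μ + 1 = (((ρ : ℕ) + 1 : ℕ) : ℤ) + k * μ := by
      push_cast; ring
    rw [hsucc, hT ⟨(ρ : ℕ) + 1, hρ⟩]
    have : τ ρ < τ ⟨(ρ : ℕ) + 1, hρ⟩ := hτ (Fin.lt_def.2 (Nat.lt_succ_self _))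
    linarith
  · have hlast : ρ = ⟨μ - 1, Nat.sub_lt hμ Nat.one_pos⟩ :=
      Fin.ext (show (ρ : ℕ) = μ - 1 by omega)
    have hwrap : ((ρ : ℕ) : ℤ) + k * μ + 1 = ((⟨0, hμ⟩ : Fin μ) : ℕ) + (k + 1) * μ := by
      rw [hlast]; push_cast [Nat.cast_sub hμ]; ring
    rw [hwrap, hT, hlast]
    push_cast
    linarith

theorem Set.iInter_Ioo_eq_Ioo_of_forall_le {ι α : Type*} [LinearOrder α] {a b : ι → α} {i j : ι}
    (hi : ∀ k, a k ≤ a i) (hj : ∀ k, b j ≤ b k) :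
    ⋂ k, Ioo (a k) (b k) = Ioo (a i) (b j) := by
  ext x
  simp only [mem_iInter, mem_Ioo]
  exact ⟨fun h => ⟨(h i).1, (h j).2⟩, fun h k => ⟨(hi k).trans_lt h.1, h.2.trans_le (hj k)⟩⟩

/-- The index `ν_ρ`, for which the `ρ`-th interval is `(T (ν_ρ - μ), T ν_ρ)`. -/
def rightIndex {μ : ℕ} (k : Fin μ → ℤ) (ρ : Fin μ) : ℤ := (ρ : ℕ) + k ρ * μ

theorem rightIndex_injective {μ : ℕ} (k : Fin μ → ℤ) : Function.Injective (rightIndex k) := by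
  intro ρ σ h
  have hmod := congrArg (· % (μ : ℤ)) h
  simp only [rightIndex, Int.add_mul_emod_self_right] at hmod
  rwa [Int.emod_eq_of_lt (by omega) (by omega), Int.emod_eq_of_lt (by omega) (by omega),
    Nat.cast_inj, Fin.val_inj] at hmod

theorem Int.card_le_of_injective_of_mem_Icc {ι : Type*} [Fintype ι] [Nonempty ι] {n : ι → ℤ}
    (hn : Function.Injective n) {a b : ℤ} (hab : ∀ i, n i ∈ Icc a b) :
    (Fintype.card ι : ℤ) ≤ b + 1 - a := by
  have hcard : (Finset.univ.image n).card ≤ (Finset.Icc a b).card :=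
    Finset.card_le_card fun x hx => by
      obtain ⟨i, -, rfl⟩ := Finset.mem_image.1 hx
      exact Finset.mem_Icc.2 (hab i)
  rw [Finset.card_image_of_injective _ hn, Finset.card_univ, Int.card_Icc] at hcard
  obtain ⟨i⟩ := ‹Nonempty ι›
  have := (hab i).1.trans (hab i).2
  omega

theorem forall_rightIndex_lt_add_iff {μ : ℕ} (hμ : 0 < μ) (k : Fin μ → ℤ) :
    (∀ ρ σ, rightIndex k σ < rightIndex k ρ + μ) ↔
      Antitone k ∧ k ⟨0, hμ⟩ - 1 ≤ k ⟨μ - 1, Nat.sub_lt hμ Nat.one_pos⟩ := by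
  have hμ' : (0 : ℤ) < μ := by exact_mod_cast hμ
  simp only [rightIndex]
  constructor
  · intro h
    refine ⟨fun ρ σ hρσ => ?_, ?_⟩
    · have hle : ((ρ : ℕ) : ℤ) ≤ σ := by exact_mod_cast hρσ
      have : k σ * μ < (k ρ + 1) * μ := by linarith [h ρ σ]
      have := lt_of_mul_lt_mul_right this hμ'.le
      omega
    · have h0 := h ⟨μ - 1, Nat.sub_lt hμ Nat.one_pos⟩ ⟨0, hμ⟩
      have : k ⟨0, hμ⟩ * μ < (k ⟨μ - 1, Nat.sub_lt hμ Nat.one_pos⟩ + 2) * μ := by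
        push_cast [Nat.cast_sub hμ] at h0; linarith
      have := lt_of_mul_lt_mul_right this hμ'.le
      omega
  · rintro ⟨hk, hbound⟩ ρ σ
    rcases le_or_gt ρ σ with hρσ | hσρ
    · have hle : k σ * μ ≤ k ρ * μ := mul_le_mul_of_nonneg_right (hk hρσ) hμ'.le
      have := σ.isLt
      omega
    · have hρ_le_last : ρ ≤ ⟨μ - 1, Nat.sub_lt hμ Nat.one_pos⟩ :=
        Fin.le_def.2 (Nat.le_sub_one_of_lt ρ.isLt)
      have hk' : k σ ≤ k ρ + 1 :=
        calc k σ ≤ k ⟨0, hμ⟩ := hk (Nat.zero_le _)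
          _ ≤ k ⟨μ - 1, Nat.sub_lt hμ Nat.one_pos⟩ + 1 := by omega
          _ ≤ k ρ + 1 := by have := hk hρ_le_last; omega
      have hle : k σ * μ ≤ (k ρ + 1) * μ := mul_le_mul_of_nonneg_right hk' hμ'.le
      have : ((σ : ℕ) : ℤ) < ρ := by exact_mod_cast hσρ
      linarith

theorem stmt_5 (μ : ℕ) (hμ : 0 < μ) (τ : Fin μ → ℝ) (hmono : StrictMono τ)
    (hπ : τ ⟨μ - 1, Nat.sub_lt hμ Nat.one_pos⟩ - τ ⟨0, hμ⟩ < π)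
    (T : ℤ → ℝ)
    (hT : ∀ (ρ : Fin μ) (k : ℤ), T ((ρ : ℕ) + k * μ) = τ ρ + k * π)
    (kvec : Fin μ → ℤ) :
    ((⋂ ρ : Fin μ,
        Set.Ioo (τ ρ + ((kvec ρ : ℝ) - 1) * π) (τ ρ + (kvec ρ : ℝ) * π)).Nonempty ↔
      (Antitone kvec ∧ kvec ⟨0, hμ⟩ - 1 ≤ kvec ⟨μ - 1, Nat.sub_lt hμ Nat.one_pos⟩))
    ∧ ((⋂ ρ : Fin μ,
          Set.Ioo (τ ρ + ((kvec ρ : ℝ) - 1) * π) (τ ρ + (kvec ρ : ℝ) * π)).Nonempty →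
        ∃ ν : ℤ,
          (⋂ ρ : Fin μ,
            Set.Ioo (τ ρ + ((kvec ρ : ℝ) - 1) * π) (τ ρ + (kvec ρ : ℝ) * π))
            = Set.Ioo (T (ν - 1)) (T ν)) := by
  have hTmono := strictMono_of_quasiperiodic_extension hμ hmono hπ hT
  set n := rightIndex kvec
  have hIoo : ∀ ρ, Ioo (τ ρ + ((kvec ρ : ℝ) - 1) * π) (τ ρ + (kvec ρ : ℝ) * π) =
      Ioo (T (n ρ - μ)) (T (n ρ)) := fun ρ => by
    simp only [n, rightIndex]
    rw [show ((ρ : ℕ) : ℤ) + kvec ρ * μ - μ = (ρ : ℕ) + (kvec ρ - 1) * μ by ring, hT, hT]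
    push_cast
    rfl
  have : Nonempty (Fin μ) := ⟨⟨0, hμ⟩⟩
  obtain ⟨i, hi⟩ := Finite.exists_max n
  obtain ⟨j, hj⟩ := Finite.exists_min n
  have hInter : ⋂ ρ, Ioo (τ ρ + ((kvec ρ : ℝ) - 1) * π) (τ ρ + (kvec ρ : ℝ) * π) =
      Ioo (T (n i - μ)) (T (n j)) := by
    simp_rw [hIoo]
    exact iInter_Ioo_eq_Ioo_of_forall_le (fun ρ => hTmono.monotone (by linarith [hi ρ]))
      (fun ρ => hTmono.monotone (hj ρ))
  have hne : (⋂ ρ, Ioo (τ ρ + ((kvec ρ : ℝ) - 1) * π) (τ ρ + (kvec ρ : ℝ) * π)).Nonempty ↔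
      ∀ ρ σ, n σ < n ρ + μ := by
    rw [hInter, nonempty_Ioo, hTmono.lt_iff_lt]
    exact ⟨fun h ρ σ => by linarith [hi σ, hj ρ], fun h => by linarith [h j i]⟩
  refine ⟨hne.trans (forall_rightIndex_lt_add_iff hμ kvec), fun h => ⟨n j, ?_⟩⟩
  have hspread : (μ : ℤ) ≤ n i + 1 - n j := by
    simpa using Int.card_le_of_injective_of_mem_Icc (rightIndex_injective kvec)
      fun ρ => ⟨hj ρ, hi ρ⟩
  rw [hInter, show n i - μ = n j - 1 by linarith [hne.1 h j i]]
end
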